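/- If α < βqN, then x'(t) attains its unique global maximum over [0, ∞) at t' = (1/τ)·ln(βqN/α), and the maximum value is x'(t') = τ²/(4β). -/

import Mathlib

/-! With u = g t > 0, the quotient rule gives x' = (τ² / β) · u / (u + 1)², and
u / (u + 1)² < 1/4 unless u = 1 because (u + 1)² - 4u = (u - 1)². Since g is injective,
g t = 1 exactly at t = t', where x' = τ² / (4β). -/

open Real

lemma div_add_one_sq_lt_quarter {u : ℝ} (hu : u ≠ 1) : u / (u + 1) ^ 2 < 1 / 4 := by
  rcases le_or_gt u 0 with hnonpos | hpos
  · exact (div_nonpos_of_nonpos_of_nonneg hnonpos (sq_nonneg _)).trans_lt (by norm_num)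
  · rw [div_lt_div_iff₀ (by positivity) (by norm_num)]
    nlinarith [sq_pos_of_ne_zero (sub_ne_zero.mpr hu)]

lemma HasDerivAt.div_add_one {u : ℝ → ℝ} {u' t : ℝ} (a b : ℝ) (hu : HasDerivAt u u' t)
    (hne : u t + 1 ≠ 0) :
    HasDerivAt (fun s => (a * u s - b) / (u s + 1)) ((a + b) * u' / (u t + 1) ^ 2) t :=
  (((hu.const_mul a).sub_const b).div (hu.add_const 1) hne).congr_deriv (by ring)

lemma hasDerivAt_const_mul_exp_mul (c τ t : ℝ) :
    HasDerivAt (fun s => c * exp (τ * s)) (τ * (c * exp (τ * t))) t :=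
  (((hasDerivAt_id t).const_mul τ).exp.const_mul c).congr_deriv (by simp only [id_eq]; ring)

lemma const_mul_exp_mul_injective {c τ : ℝ} (hc : c ≠ 0) (hτ : τ ≠ 0) :
    Function.Injective fun s => c * exp (τ * s) :=
  (mul_right_injective₀ hc).comp (exp_injective.comp (mul_right_injective₀ hτ))

theorem stmt_12_general (N α β q τ : ℝ) (hN : 0 < N) (hα : 0 < α) (hβ : 0 < β) (hq : 0 < q)
    (hτ : τ = α + β * q * N)
    (g x : ℝ → ℝ)
    (hg : ∀ t, g t = (α / (β * q * N)) * Real.exp (τ * t))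
    (hx : ∀ t, x t = (q * N * g t - α / β) / (g t + 1))
    (t' : ℝ) (ht' : t' = (1 / τ) * Real.log (β * q * N / α)) :
    (∀ t : ℝ, 0 ≤ t → t ≠ t' → deriv x t < deriv x t') ∧
    deriv x t' = τ ^ 2 / (4 * β) := by
  have hτ0 : 0 < τ := by rw [hτ]; positivity
  have hg_eq : g = fun s => (α / (β * q * N)) * exp (τ * s) := funext hg
  have hderiv (t : ℝ) : deriv x t = τ ^ 2 / β * (g t / (g t + 1) ^ 2) := by
    have hgt : 0 < g t := by rw [hg]; positivity
    have hgd : HasDerivAt g (τ * g t) t := by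
      rw [hg_eq]; exact hasDerivAt_const_mul_exp_mul _ _ _
    rw [funext hx, ((hgd.div_add_one (q * N) (α / β)) (by positivity)).deriv, hτ]
    field_simp
    ring
  have hgt' : g t' = 1 := by
    rw [hg, ht', ← mul_assoc, mul_one_div_cancel hτ0.ne', one_mul, exp_log (by positivity)]
    field_simp
  have hval : deriv x t' = τ ^ 2 / (4 * β) := by rw [hderiv, hgt']; ring
  refine ⟨fun t _ hne => ?_, hval⟩
  have hgt_ne : g t ≠ 1 := by
    rw [← hgt', hg_eq]
    exact (const_mul_exp_mul_injective (by positivity) hτ0.ne').ne hne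
  calc deriv x t = τ ^ 2 / β * (g t / (g t + 1) ^ 2) := hderiv t
    _ < τ ^ 2 / β * (1 / 4) := by gcongr ?_ * ?_; exact div_add_one_sq_lt_quarter hgt_ne
    _ = deriv x t' := by rw [hval]; ring

theorem stmt_12 (N α β q τ : ℝ) (hN : 0 < N) (hα : 0 < α) (hβ : 0 < β) (hq : 0 < q)
    (hτ : τ = α + β * q * N)
    (g x : ℝ → ℝ)
    (hg : ∀ t, g t = (α / (β * q * N)) * Real.exp (τ * t))
    (hx : ∀ t, x t = (q * N * g t - α / β) / (g t + 1))
    (hcase : α < β * q * N)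
    (t' : ℝ) (ht' : t' = (1 / τ) * Real.log (β * q * N / α)) :
    (∀ t : ℝ, 0 ≤ t → t ≠ t' → deriv x t < deriv x t') ∧
    deriv x t' = τ ^ 2 / (4 * β) :=
  stmt_12_general N α β q τ hN hα hβ hq hτ g x hg hx t' ht'
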